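/- arXiv:1012.1034 — 2 statements merged into one kernel-verified Lean document; each statement's English description precedes it below -/
import Mathlib

section
/- Let (V, ω) be a finite-dimensional symplectic vector space with a linear map Φ : V → V satisfying Φ² = Id and Φ*ω = −ω. Let g be a positive definite symmetric bilinear form on V with Φ*g = g. Define A : V → V by ω(v, w) = g(Av, w), and let Q be the unique g-self-adjoint, g-positive-definite square root of A*A (with A* the g-adjoint). Then J := Q⁻¹A is an ω-compatible complex structure on V (J² = −Id, ω(Jv, Jw) = ω(v, w), ω(v, Jv) > 0 for v ≠ 0) which satisfies ΦJ = −JΦ. -/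
/-!
Since `ω` is skew, `A` is `g`-skew; hence `A* = -A` and `Q² = -A²`. Positive square roots are
unique, so `Q` commutes with every invertible `T` that commutes with `Q²` and for which `TQT⁻¹`
is again positive and self-adjoint. This applies to `A` and to the `g`-isometry `Φ`, which
anticommutes with `A`. Hence `J² = Q⁻²A² = -1`, `AJ = -Q` and `ΦJ = -JΦ`, and
`ω(v, Jw) = -g(v, AJw) = g(v, Qw)` gives compatibility with `ω`.
-/

open LinearMap Module

theorem LinearMap.IsOrthoᵢ.toMatrix_apply_self_mul {R M ι : Type*} [CommSemiring R]
    [AddCommMonoid M] [Module R M] [Fintype ι] [DecidableEq ι] {B : LinearMap.BilinForm R M}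
    {b : Basis ι R M} (hb : B.IsOrthoᵢ b) (f : Module.End R M) (j : ι) :
    toMatrix b b f j j * B (b j) (b j) = B (f (b j)) (b j) := by
  conv_rhs => rw [← b.sum_repr (f (b j))]
  simp only [map_sum, map_smul, LinearMap.sum_apply, LinearMap.smul_apply, smul_eq_mul]
  rw [Finset.sum_eq_single j (fun i _ hij => by rw [hb hij, mul_zero]) (by simp),
    toMatrix_apply]

section

variable {V : Type*} [AddCommGroup V] [Module ℝ V] {g : LinearMap.BilinForm ℝ V}
  {Q : Module.End ℝ V}

theorem LinearMap.IsOrthoᵢ.apply_self_eq_zero_of_trace_eq_zero {ι : Type*} [Fintype ι]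
    [DecidableEq ι] {b : Basis ι ℝ V} (hb : g.IsOrthoᵢ b) (hg : ∀ v, v ≠ 0 → 0 < g v v)
    {f : Module.End ℝ V} (hf : ∀ v, 0 ≤ g (f v) v) (htr : trace ℝ V f = 0) (j : ι) :
    g (f (b j)) (b j) = 0 := by
  have hdiag_nonneg : ∀ i, 0 ≤ toMatrix b b f i i := fun i => by
    have := hb.toMatrix_apply_self_mul f i
    exact nonneg_of_mul_nonneg_left (this ▸ hf (b i)) (hg _ (b.ne_zero i))
  have hdiag_sum : ∑ i, toMatrix b b f i i = 0 := by
    rwa [trace_eq_matrix_trace ℝ b] at htr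
  have hdiag : toMatrix b b f j j = 0 :=
    (Finset.sum_eq_zero_iff_of_nonneg fun i _ => hdiag_nonneg i).1 hdiag_sum j (Finset.mem_univ j)
  rw [← hb.toMatrix_apply_self_mul, hdiag, zero_mul]

namespace LinearMap.BilinForm

theorem injective_of_pos (hQpos : ∀ v, v ≠ 0 → 0 < g (Q v) v) :
    Function.Injective Q :=
  (injective_iff_map_eq_zero Q).2 fun v hv => by_contra fun h => by simpa [hv] using hQpos v h

theorem eq_of_forall_apply_eq (hg : ∀ v, v ≠ 0 → 0 < g v v) {x y : V}
    (h : ∀ w, g x w = g y w) : x = y :=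
  sub_eq_zero.1 (by_contra fun hne => (hg _ hne).ne' (by simp [h]))

theorem eq_neg_of_isAdjointPair (hgs : g.IsSymm) (hg : ∀ v, v ≠ 0 → 0 < g v v)
    {A B : Module.End ℝ V} (hA : g.IsSkewAdjoint A) (hAB : IsAdjointPair g g A B) : B = -A :=
  LinearMap.ext fun v => eq_of_forall_apply_eq hg fun w => by
    rw [hgs.eq, ← hAB, hA, hgs.eq]
    simp

theorem isLeftRegular_of_pos (hQpos : ∀ v, v ≠ 0 → 0 < g (Q v) v) :
    IsLeftRegular Q := fun _ _ h => LinearMap.ext fun v => injective_of_pos hQpos congr($h v)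

variable [FiniteDimensional ℝ V]

/-- With `D = P - R` and `S = P + R`, `P² = R²` gives `SD = -DS`, so `DSD` has trace zero;
but `g(DSDv, v) = g(SDv, Dv) ≥ 0`, which forces `D = 0`. -/
theorem eq_of_mul_self_eq_mul_self (hgs : g.IsSymm)
    (hg : ∀ v, v ≠ 0 → 0 < g v v) {P R : Module.End ℝ V} (hP : g.IsSelfAdjoint P)
    (hR : g.IsSelfAdjoint R) (hPpos : ∀ v, v ≠ 0 → 0 < g (P v) v)
    (hRpos : ∀ v, v ≠ 0 → 0 < g (R v) v) (hPR : P * P = R * R) : P = R := by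
  set D := P - R
  set S := P + R
  have hSpos : ∀ v, v ≠ 0 → 0 < g (S v) v := fun v hv => by
    simpa only [S, LinearMap.add_apply, map_add] using add_pos (hPpos v hv) (hRpos v hv)
  have hD : g.IsSelfAdjoint D := IsAdjointPair.sub hP hR
  have hanti : S * D = -(D * S) := by
    simp only [S, D, add_mul, sub_mul, mul_add, mul_sub, hPR]
    abel
  have htr : trace ℝ V (D * S * D) = 0 := by
    have h : trace ℝ V (D * S * D) = -trace ℝ V (D * S * D) :=
      calc trace ℝ V (D * S * D) = trace ℝ V (S * D * D) := by
            rw [mul_assoc]; exact trace_mul_comm ℝ D (S * D)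
        _ = -trace ℝ V (D * S * D) := by rw [hanti, neg_mul, map_neg]
    linarith
  have hform : ∀ v, g ((D * S * D) v) v = g (S (D v)) (D v) := fun v => hD _ _
  have hform_nonneg : ∀ v, 0 ≤ g ((D * S * D) v) v := fun v => by
    rw [hform]
    rcases eq_or_ne (D v) 0 with h | h
    · simp [h]
    · exact (hSpos _ h).le
  obtain ⟨b, hb⟩ := exists_orthogonal_basis (isSymm_iff.1 hgs)
  have hDb : ∀ j, D (b j) = 0 := fun j => by
    by_contra h
    have := hb.apply_self_eq_zero_of_trace_eq_zero hg hform_nonneg htr j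
    exact (hSpos _ h).ne' (hform _ ▸ this)
  exact sub_eq_zero.1 (b.ext fun j => hDb j)

theorem commute_of_commute_mul_self (hgs : g.IsSymm) (hg : ∀ v, v ≠ 0 → 0 < g v v)
    (hQ : g.IsSelfAdjoint Q) (hQpos : ∀ v, v ≠ 0 → 0 < g (Q v) v)
    (e : V ≃ₗ[ℝ] V) (hcomm : Commute (e : Module.End ℝ V) (Q * Q))
    (hsa : ∀ x y, g (e (Q x)) (e y) = g (e x) (e (Q y)))
    (hpos : ∀ x, x ≠ 0 → 0 < g (e (Q x)) (e x)) :
    Commute (e : Module.End ℝ V) Q := by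
  have hconj : ∀ x, e.conj Q (e x) = e (Q x) := fun x => by simp [LinearEquiv.conj_apply]
  have hsq : ∀ x, Q (Q (e x)) = e (Q (Q x)) := fun x => (congr($hcomm x)).symm
  have hPQ : e.conj Q = Q := by
    refine eq_of_mul_self_eq_mul_self hgs hg (fun v w => ?_) hQ (fun v hv => ?_) hQpos ?_
    · obtain ⟨x, rfl⟩ := e.surjective v
      obtain ⟨y, rfl⟩ := e.surjective w
      rw [hconj, hconj, hsa]
    · obtain ⟨x, rfl⟩ := e.surjective v
      rw [hconj]
      exact hpos x (by simpa using hv)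
    · ext v
      obtain ⟨x, rfl⟩ := e.surjective v
      simp only [Module.End.mul_apply, hconj, hsq]
  ext x
  simpa only [Module.End.mul_apply, LinearEquiv.coe_coe, hconj] using congr($hPQ (e x))

theorem commute_of_isOrthogonal (hgs : g.IsSymm) (hg : ∀ v, v ≠ 0 → 0 < g v v)
    (hQ : g.IsSelfAdjoint Q) (hQpos : ∀ v, v ≠ 0 → 0 < g (Q v) v)
    (e : V ≃ₗ[ℝ] V) (he : g.IsOrthogonal e) (hcomm : Commute (e : Module.End ℝ V) (Q * Q)) :
    Commute (e : Module.End ℝ V) Q :=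
  commute_of_commute_mul_self hgs hg hQ hQpos e hcomm (fun x y => by rw [he, he, hQ])
    (fun x hx => by rw [he]; exact hQpos x hx)

theorem commute_of_isSkewAdjoint (hgs : g.IsSymm) (hg : ∀ v, v ≠ 0 → 0 < g v v)
    (hQ : g.IsSelfAdjoint Q) (hQpos : ∀ v, v ≠ 0 → 0 < g (Q v) v)
    {A : Module.End ℝ V} (hA : g.IsSkewAdjoint A) (hAA : A * A = -(Q * Q)) : Commute A Q := by
  have hA' : ∀ x y, g (A x) y = -g x (A y) := fun x y => by simpa using hA x y
  have hAA' : ∀ x, A (A x) = -Q (Q x) := fun x => congr($hAA x)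
  have hQinj := injective_of_pos hQpos
  have hinj : Function.Injective A := fun x y hxy =>
    hQinj (hQinj (by simpa only [hAA', neg_inj] using congr(A $hxy)))
  have he : (LinearEquiv.ofInjectiveEndo A hinj : Module.End ℝ V) = A := rfl
  have := commute_of_commute_mul_self hgs hg hQ hQpos (LinearEquiv.ofInjectiveEndo A hinj) ?_
    (fun x y => ?_) (fun x hx => ?_)
  · rwa [he] at this
  · rw [he, neg_eq_iff_eq_neg.1 hAA.symm]
    exact ((Commute.refl A).mul_right (Commute.refl A)).neg_right
  · calc g (A (Q x)) (A y) = -g (Q x) (A (A y)) := hA' _ _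
      _ = g (Q x) (Q (Q y)) := by rw [hAA', map_neg, neg_neg]
      _ = g x (Q (Q (Q y))) := hQ _ _
      _ = -g x (A (A (Q y))) := by rw [hAA', map_neg, neg_neg]
      _ = g (A x) (A (Q y)) := (hA' _ _).symm
  · calc 0 < g (Q (Q x)) (Q x) := hQpos _ ((map_ne_zero_iff Q hQinj).2 hx)
      _ = g (Q x) (Q (Q x)) := hQ _ _
      _ = g (A (Q x)) (A x) := by rw [hA', hAA', map_neg, neg_neg]

theorem mul_self_eq_neg_one_of_mul_eq (hgs : g.IsSymm) (hg : ∀ v, v ≠ 0 → 0 < g v v)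
    (hQ : g.IsSelfAdjoint Q) (hQpos : ∀ v, v ≠ 0 → 0 < g (Q v) v) {A J : Module.End ℝ V}
    (hA : g.IsSkewAdjoint A) (hAA : A * A = -(Q * Q)) (hQJ : Q * J = A) : J * J = -1 := by
  have hcancel := isLeftRegular_of_pos hQpos
  refine hcancel (hcancel ?_)
  calc Q * (Q * (J * J)) = Q * A * J := by rw [← mul_assoc Q J, hQJ, mul_assoc]
    _ = A * A := by rw [← (commute_of_isSkewAdjoint hgs hg hQ hQpos hA hAA).eq, mul_assoc, hQJ]
    _ = Q * (Q * -1) := by rw [hAA, mul_neg_one, mul_neg]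

theorem mul_eq_neg_mul_of_mul_eq (hgs : g.IsSymm) (hg : ∀ v, v ≠ 0 → 0 < g v v)
    (hQ : g.IsSelfAdjoint Q) (hQpos : ∀ v, v ≠ 0 → 0 < g (Q v) v) {A J : Module.End ℝ V}
    (hAA : A * A = -(Q * Q)) (hQJ : Q * J = A) (e : V ≃ₗ[ℝ] V) (he : g.IsOrthogonal e)
    (heA : e * A = -(A * e)) : e * J = -(J * e) := by
  have heAA : Commute (e : Module.End ℝ V) (A * A) :=
    calc e * (A * A) = e * A * A := (mul_assoc _ _ _).symm
      _ = A * A * e := by rw [heA, neg_mul, mul_assoc, heA, mul_neg, neg_neg, mul_assoc]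
  have heQ := commute_of_isOrthogonal hgs hg hQ hQpos e he
    (by rw [neg_eq_iff_eq_neg.1 hAA.symm]; exact heAA.neg_right)
  refine isLeftRegular_of_pos hQpos (show Q * (e * J) = Q * -(J * e) from ?_)
  rw [← mul_assoc, ← heQ.eq, mul_assoc, hQJ, heA, ← hQJ, mul_assoc, mul_neg]

end LinearMap.BilinForm

end

theorem stmt2_general {V : Type*} [AddCommGroup V] [Module ℝ V] [FiniteDimensional ℝ V]
    (ω g : V →ₗ[ℝ] V →ₗ[ℝ] ℝ)
    (hωskew : ∀ v w, ω v w = - ω w v)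
    (hgsymm : ∀ v w, g v w = g w v)
    (hgpos : ∀ v, v ≠ 0 → 0 < g v v)
    (Φ : V →ₗ[ℝ] V) (hΦ2 : Φ ∘ₗ Φ = LinearMap.id)
    (hΦω : ∀ v w, ω (Φ v) (Φ w) = - ω v w)
    (hΦg : ∀ v w, g (Φ v) (Φ w) = g v w)
    (A : V →ₗ[ℝ] V) (hA : ∀ v w, ω v w = g (A v) w)
    (Astar : V →ₗ[ℝ] V) (hAstar : ∀ v w, g (A v) w = g v (Astar w))
    (Q : V →ₗ[ℝ] V)
    (hQsa : ∀ v w, g (Q v) w = g v (Q w))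
    (hQpos : ∀ v, v ≠ 0 → 0 < g (Q v) v)
    (hQsq : Q ∘ₗ Q = Astar ∘ₗ A)
    (J : V →ₗ[ℝ] V) (hQJ : Q ∘ₗ J = A) :
    (J ∘ₗ J = - LinearMap.id) ∧
    (∀ v w, ω (J v) (J w) = ω v w) ∧
    (∀ v, v ≠ 0 → 0 < ω v (J v)) ∧
    (Φ ∘ₗ J = - (J ∘ₗ Φ)) := by
  simp only [← Module.End.mul_eq_comp] at hQsq hQJ hΦ2 ⊢
  rw [← Module.End.one_eq_id] at hΦ2 ⊢
  have hgs : LinearMap.BilinForm.IsSymm g := ⟨hgsymm⟩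
  have hAskew : ∀ v w, g (A v) w = -g v (A w) := fun v w => by
    rw [← hA, hωskew, hA, hgsymm]
  have hAskew' : g.IsSkewAdjoint A := fun v w => by simp [hAskew]
  have hAA : A * A = -(Q * Q) := by
    rw [hQsq, BilinForm.eq_neg_of_isAdjointPair hgs hgpos hAskew' hAstar, neg_mul, neg_neg]
  have hΦinv : Function.Involutive Φ := fun v => congr($hΦ2 v)
  have hΦA : Φ * A = -(A * Φ) := LinearMap.ext fun v => BilinForm.eq_of_forall_apply_eq hgpos
    fun w => by
      obtain ⟨u, rfl⟩ := hΦinv.surjective w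
      simp only [Module.End.mul_apply, LinearMap.neg_apply, map_neg, hΦg, ← hA, hΦω, neg_neg]
  have hJJ := BilinForm.mul_self_eq_neg_one_of_mul_eq hgs hgpos hQsa hQpos hAskew' hAA hQJ
  have hAJ : A * J = -Q := by rw [← hQJ, mul_assoc, hJJ, mul_neg_one]
  have hAJ' : ∀ v, A (J v) = -Q v := fun v => congr($hAJ v)
  refine ⟨hJJ, fun v w => ?_, fun v hv => ?_,
    BilinForm.mul_eq_neg_mul_of_mul_eq hgs hgpos hQsa hQpos hAA hQJ
      (LinearEquiv.ofInvolutive Φ hΦinv) hΦg hΦA⟩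
  · rw [hA, hA, hAJ', map_neg, LinearMap.neg_apply, hQsa, ← Module.End.mul_apply, hQJ, hAskew]
  · rw [hA, hAskew, hAJ', map_neg, neg_neg, ← hQsa]
    exact hQpos v hv

/-- Let `(V, ω)` be a finite-dimensional symplectic vector space with a linear
map `Φ` satisfying `Φ² = Id` and `Φ*ω = −ω`.  Let `g` be a `Φ`-invariant inner product, let
`A` be defined by `ω(v, w) = g(Av, w)`, and let `Q` be the `g`-self-adjoint, `g`-positive
definite square root of `A*A`.  Then `J := Q⁻¹A` is an `ω`-compatible complex structure
(`J² = −Id`, `ω(Jv, Jw) = ω(v, w)`, `ω(v, Jv) > 0` for `v ≠ 0`) and `ΦJ = −JΦ`. -/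
theorem stmt2 {V : Type*} [AddCommGroup V] [Module ℝ V] [FiniteDimensional ℝ V]
    (ω g : V →ₗ[ℝ] V →ₗ[ℝ] ℝ)
    (hωskew : ∀ v w, ω v w = - ω w v)
    (hωnondeg : ∀ v, (∀ w, ω v w = 0) → v = 0)
    (hgsymm : ∀ v w, g v w = g w v)
    (hgpos : ∀ v, v ≠ 0 → 0 < g v v)
    (Φ : V →ₗ[ℝ] V) (hΦ2 : Φ ∘ₗ Φ = LinearMap.id)
    (hΦω : ∀ v w, ω (Φ v) (Φ w) = - ω v w)
    (hΦg : ∀ v w, g (Φ v) (Φ w) = g v w)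
    (A : V →ₗ[ℝ] V) (hA : ∀ v w, ω v w = g (A v) w)
    (Astar : V →ₗ[ℝ] V) (hAstar : ∀ v w, g (A v) w = g v (Astar w))
    (Q : V →ₗ[ℝ] V)
    (hQsa : ∀ v w, g (Q v) w = g v (Q w))
    (hQpos : ∀ v, v ≠ 0 → 0 < g (Q v) v)
    (hQsq : Q ∘ₗ Q = Astar ∘ₗ A)
    (J : V →ₗ[ℝ] V) (hQJ : Q ∘ₗ J = A) :
    (J ∘ₗ J = - LinearMap.id) ∧
    (∀ v w, ω (J v) (J w) = ω v w) ∧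
    (∀ v, v ≠ 0 → 0 < ω v (J v)) ∧
    (Φ ∘ₗ J = - (J ∘ₗ Φ)) :=
  stmt2_general ω g hωskew hgsymm hgpos Φ hΦ2 hΦω hΦg A hA Astar hAstar Q hQsa hQpos hQsq J hQJ
end

section
/- Let λ > 0, δ > 0 with δ² < λ²ε/2 for some ε > 0, and define F : ℝ²ⁿ \ {0} → ℝ²ⁿ by F(x) = h_λ(x)·x for |x| < δ where h_λ(x) = (1 + λ²/|x|²)^{1/2}, F(x) = β(|x|)·h_λ(δx/|x|)·(δx/|x|) + (1 − β(|x|))·λ(1+ε)x/|x| for δ ≤ |x| ≤ 1+ε, and F(x) = λx for |x| ≥ 1+ε, where β is a smooth bump function equal to 1 for t ≤ δ and 0 for t ≥ 1+ε. Then F is a monotone radial function: F(z) = α(|z|)z for a nonnegative real-valued α, and |z₁| ≤ |z₂| implies |F(z₁)| ≤ |F(z₂)|. -/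
/-- Let `λ > 0`, `ε > 0`, `δ > 0` with `δ² < λ²ε/2`, and let
`F : ℝ²ⁿ \ {0} → ℝ²ⁿ` be defined piecewise by `F(x) = h_λ(x)·x` for `|x| < δ` (where
`h_λ(x) = (1 + λ²/|x|²)^{1/2}`), by the bump-function interpolation
`F(x) = β(|x|)·h_λ(δx/|x|)·(δx/|x|) + (1 − β(|x|))·λ(1+ε)x/|x|` for `δ ≤ |x| ≤ 1+ε`, and by
`F(x) = λx` for `|x| ≥ 1+ε`, where `β` is a (nonincreasing) bump function equal to `1` for
`t ≤ δ` and to `0` for `t ≥ 1+ε`.  Then `F` is a monotone radial function: `F(z) = α(|z|)·z`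
for some nonnegative `α`, and `|z₁| ≤ |z₂| ⟹ |F(z₁)| ≤ |F(z₂)|`. -/
theorem stmt10 {n : ℕ} (lam ε δ : ℝ)
    (hlam : 0 < lam) (hε : 0 < ε) (hδ : 0 < δ)
    (hδε : δ ^ 2 < lam ^ 2 * ε / 2)
    (β : ℝ → ℝ) (hβsmooth : ContDiff ℝ (⊤ : ℕ∞) β)
    (hβ0 : ∀ t, 0 ≤ β t) (hβ1 : ∀ t, β t ≤ 1)
    (hβone : ∀ t, t ≤ δ → β t = 1) (hβzero : ∀ t, 1 + ε ≤ t → β t = 0)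
    (hβmono : Antitone β)
    (F : EuclideanSpace ℝ (Fin (2 * n)) → EuclideanSpace ℝ (Fin (2 * n)))
    (hF1 : ∀ x, x ≠ 0 → ‖x‖ < δ → F x = Real.sqrt (1 + lam ^ 2 / ‖x‖ ^ 2) • x)
    (hF2 : ∀ x : EuclideanSpace ℝ (Fin (2 * n)), δ ≤ ‖x‖ → ‖x‖ ≤ 1 + ε →
      F x = (β ‖x‖ * (Real.sqrt (1 + lam ^ 2 / δ ^ 2) * (δ / ‖x‖))
        + (1 - β ‖x‖) * (lam * (1 + ε) / ‖x‖)) • x)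
    (hF3 : ∀ x : EuclideanSpace ℝ (Fin (2 * n)), 1 + ε ≤ ‖x‖ → F x = lam • x) :
    (∃ αF : ℝ → ℝ, (∀ t, 0 ≤ αF t) ∧
      ∀ x : EuclideanSpace ℝ (Fin (2 * n)), x ≠ 0 → F x = αF ‖x‖ • x) ∧
    (∀ z₁ z₂ : EuclideanSpace ℝ (Fin (2 * n)), z₁ ≠ 0 → z₂ ≠ 0 →
      ‖z₁‖ ≤ ‖z₂‖ → ‖F z₁‖ ≤ ‖F z₂‖) := by
  have hεpos : (0:ℝ) < 1 + ε := by linarith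
  set s : ℝ := Real.sqrt (1 + lam ^ 2 / δ ^ 2) with hs
  set A : ℝ := lam * (1 + ε) with hA
  set B : ℝ := s * δ with hBdef
  have hs0 : 0 ≤ s := Real.sqrt_nonneg _
  have hB_eq : B = Real.sqrt (δ ^ 2 + lam ^ 2) := by
    rw [hBdef, hs, ← Real.sqrt_sq hδ.le, ← Real.sqrt_mul (by positivity)]
    congr 1
    field_simp
    rw [Real.sq_sqrt (sq_nonneg _)]
  have hApos : 0 < A := by positivity
  have hBA : B < A := by
    rw [hB_eq]
    have h2 : δ ^ 2 + lam ^ 2 < A ^ 2 := by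
      have : A ^ 2 = lam ^ 2 + lam ^ 2 * (2 * ε + ε ^ 2) := by rw [hA]; ring
      nlinarith
    calc Real.sqrt (δ ^ 2 + lam ^ 2) < Real.sqrt (A ^ 2) :=
          Real.sqrt_lt_sqrt (by positivity) h2
      _ = A := Real.sqrt_sq hApos.le
  set αF : ℝ → ℝ := fun t => if t < δ then Real.sqrt (1 + lam ^ 2 / t ^ 2)
    else if t ≤ 1 + ε then β t * (s * (δ / t)) + (1 - β t) * (A / t) else lam
    with hαF
  have hαnonneg : ∀ t, 0 ≤ αF t := by
    intro t
    rw [hαF]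
    by_cases h1 : t < δ
    · simp only [h1, if_true]; positivity
    · simp only [h1, if_false]
      push_neg at h1
      have ht : 0 < t := lt_of_lt_of_le hδ h1
      by_cases h2 : t ≤ 1 + ε
      · simp only [h2, if_true]
        have hb := hβ0 t
        have hb1 := hβ1 t
        have : 0 ≤ β t * (s * (δ / t)) := by positivity
        have h4 : 0 ≤ (1 - β t) * (A / t) := by
          apply mul_nonneg (by linarith) (by positivity)
        linarith
      · simp only [h2, if_false]; exact hlam.le
  have hFeq : ∀ x : EuclideanSpace ℝ (Fin (2 * n)), x ≠ 0 → F x = αF ‖x‖ • x := by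
    intro x hx
    have hxn : 0 < ‖x‖ := norm_pos_iff.mpr hx
    rw [hαF]
    by_cases h1 : ‖x‖ < δ
    · simp only [h1, if_true]; exact hF1 x hx h1
    · push_neg at h1
      by_cases h2 : ‖x‖ ≤ 1 + ε
      · simp only [not_lt.mpr h1, if_false, h2, if_true]
        exact hF2 x h1 h2
      · simp only [not_lt.mpr h1, if_false, h2, if_false]
        exact hF3 x (le_of_not_ge h2)
  -- the modulus function m t = αF t * t
  have hm_mono : ∀ t₁ t₂ : ℝ, 0 < t₁ → t₁ ≤ t₂ → αF t₁ * t₁ ≤ αF t₂ * t₂ := by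
    have hval : ∀ t, 0 < t → αF t * t =
        if t < δ then Real.sqrt (t ^ 2 + lam ^ 2)
        else if t ≤ 1 + ε then β t * B + (1 - β t) * A else lam * t := by
      intro t ht
      rw [hαF]
      by_cases h1 : t < δ
      · simp only [h1, if_true]
        rw [← Real.sqrt_sq ht.le, ← Real.sqrt_mul (by positivity)]
        congr 1
        field_simp
        rw [Real.sq_sqrt (sq_nonneg _)]
      · simp only [h1, if_false]
        by_cases h2 : t ≤ 1 + ε
        · simp only [h2, if_true]
          field_simp
          rw [hBdef]; ring
        · simp only [h2, if_false]
    -- bounds on the middle branch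
    have hmidB : ∀ t, β t * B + (1 - β t) * A ∈ Set.Icc B A := by
      intro t
      have hb := hβ0 t
      have hb1 := hβ1 t
      constructor
      · nlinarith
      · nlinarith
    intro t₁ t₂ ht₁ ht₂
    have ht₂p : 0 < t₂ := lt_of_lt_of_le ht₁ ht₂
    rw [hval t₁ ht₁, hval t₂ ht₂p]
    by_cases h1 : t₁ < δ
    · simp only [h1, if_true]
      have hs1 : Real.sqrt (t₁ ^ 2 + lam ^ 2) ≤ Real.sqrt (δ ^ 2 + lam ^ 2) :=
        Real.sqrt_le_sqrt (by nlinarith)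
      by_cases h2 : t₂ < δ
      · simp only [h2, if_true]
        exact Real.sqrt_le_sqrt (by nlinarith)
      · push_neg at h2
        simp only [not_lt.mpr h2, if_false]
        by_cases h3 : t₂ ≤ 1 + ε
        · simp only [h3, if_true]
          calc Real.sqrt (t₁ ^ 2 + lam ^ 2) ≤ B := by rw [hB_eq]; exact hs1
            _ ≤ _ := (hmidB t₂).1
        · simp only [h3, if_false]
          push_neg at h3
          calc Real.sqrt (t₁ ^ 2 + lam ^ 2) ≤ B := by rw [hB_eq]; exact hs1
            _ ≤ A := hBA.le
            _ ≤ lam * t₂ := by rw [hA]; nlinarith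
    · push_neg at h1
      simp only [not_lt.mpr h1, if_false]
      have h1' : ¬ t₂ < δ := not_lt.mpr (le_trans h1 ht₂)
      simp only [h1', if_false]
      by_cases h2 : t₁ ≤ 1 + ε
      · simp only [h2, if_true]
        by_cases h3 : t₂ ≤ 1 + ε
        · simp only [h3, if_true]
          have hb := hβmono ht₂
          nlinarith
        · simp only [h3, if_false]
          push_neg at h3
          calc β t₁ * B + (1 - β t₁) * A ≤ A := (hmidB t₁).2
            _ ≤ lam * t₂ := by rw [hA]; nlinarith
      · push_neg at h2
        simp only [not_le.mpr h2, if_false]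
        have h3 : ¬ t₂ ≤ 1 + ε := not_le.mpr (lt_of_lt_of_le h2 ht₂)
        simp only [h3, if_false]
        nlinarith
  refine ⟨⟨αF, hαnonneg, hFeq⟩, ?_⟩
  intro z₁ z₂ hz₁ hz₂ hle
  rw [hFeq z₁ hz₁, hFeq z₂ hz₂, norm_smul, norm_smul,
    Real.norm_of_nonneg (hαnonneg _), Real.norm_of_nonneg (hαnonneg _)]
  exact hm_mono _ _ (norm_pos_iff.mpr hz₁) hle
end
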